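/- Let k ≥ 0 and n ≥ 1. For each set partition π of Fin(2k) into at most n blocks, define the matrix X_π : (Fin k → Fin n) × (Fin k → Fin n) → ℂ by X_π(I, J) = 1 if the kernel partition of the concatenated tuple (I, J) : Fin(2k) → Fin n equals π, and X_π(I, J) = 0 otherwise. Then {X_π : π a set partition of Fin(2k) with at most n blocks} is a basis of the complex vector space of matrices f satisfying f(σ ∘ I, σ ∘ J) = f(I, J) for all σ ∈ S_n. -/

import Mathlib

/-!
Two tuples `g h : Fin m → Fin n` lie in the same `S_n`-orbit exactly when they have the same
kernel partition: a bijection between their ranges matching `g x` with `h x` extends to a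
permutation of `Fin n`. The kernels that occur are exactly the partitions with at most `n`
blocks. Hence an invariant matrix is the same thing as a function of `ker (I, J)` on such
partitions, and `X_π` is the matrix corresponding to the indicator function of `π`.
-/

noncomputable section
open scoped Classical

/-- The space `End_{S_n}(M_n^{⊗k})` in the standard basis: matrices
`f : (Fin k → Fin n) × (Fin k → Fin n) → ℂ` with `f (σ ∘ I, σ ∘ J) = f (I, J)`
for all `σ ∈ S_n`. -/
def MEnd (n k : ℕ) : Submodule ℂ ((Fin k → Fin n) × (Fin k → Fin n) → ℂ) where
  carrier := {f | ∀ (σ : Equiv.Perm (Fin n)) (I J : Fin k → Fin n),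
    f (⇑σ ∘ I, ⇑σ ∘ J) = f (I, J)}
  add_mem' := by
    intro a b ha hb σ I J
    simp only [Pi.add_apply, ha σ I J, hb σ I J]
  zero_mem' := by intro σ I J; rfl
  smul_mem' := by
    intro c a ha σ I J
    simp only [Pi.smul_apply, ha σ I J]

open Function

namespace Setoid

variable {α β γ : Type*}

instance [Finite α] : Finite (Setoid α) :=
  Finite.of_injective (fun r : Setoid α => ⇑r) fun _ _ h =>
    Setoid.ext fun x y => iff_of_eq (congrFun₂ h x y)

theorem ker_comp_of_injective (g : α → β) {e : β → γ} (he : Injective e) :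
    ker (e ∘ g) = ker g :=
  Setoid.ext fun _ _ => by simp only [ker_def, comp_apply, he.eq_iff]

theorem card_quotient_ker_le [Finite β] (f : α → β) :
    Nat.card (Quotient (ker f)) ≤ Nat.card β :=
  (Nat.card_congr (quotientKerEquivRange f)).trans_le
    (Nat.card_le_card_of_injective _ Subtype.val_injective)

theorem exists_ker_eq_of_card_le [Finite α] [Finite β] (r : Setoid α)
    (hr : Nat.card (Quotient r) ≤ Nat.card β) : ∃ f : α → β, ker f = r := by
  have := Fintype.ofFinite (Quotient r)
  have := Fintype.ofFinite β
  rw [Nat.card_eq_fintype_card, Nat.card_eq_fintype_card] at hr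
  obtain ⟨e⟩ := Embedding.nonempty_of_card_le hr
  exact ⟨e ∘ Quotient.mk'', by rw [ker_comp_of_injective _ e.injective, ker_mk_eq]⟩

theorem exists_perm_comp_eq_of_ker_eq [Finite β] {g h : α → β} (hker : ker g = ker h) :
    ∃ σ : Equiv.Perm β, σ ∘ g = h := by
  let e : Set.range g ≃ Set.range h :=
    (quotientKerEquivRange g).symm.trans
      ((Quotient.congrRight (Setoid.ext_iff.1 hker)).trans (quotientKerEquivRange h))
  have he : ∀ x, e ⟨g x, x, rfl⟩ = ⟨h x, x, rfl⟩ := fun x => by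
    have hg : (quotientKerEquivRange g).symm ⟨g x, x, rfl⟩ = Quotient.mk _ x :=
      (Equiv.symm_apply_eq _).2 rfl
    simp only [e, Equiv.trans_apply, hg]
    rfl
  refine ⟨e.extendSubtype, funext fun x => ?_⟩
  rw [comp_apply, e.extendSubtype_apply_of_mem _ ⟨x, rfl⟩, he]

end Setoid

theorem Fin.comp_append {α β : Type*} {p q : ℕ} (f : α → β) (I : Fin p → α)
    (J : Fin q → α) :
    f ∘ Fin.append I J = Fin.append (f ∘ I) (f ∘ J) := by
  funext x
  induction x using Fin.addCases <;> simp

abbrev PartitionsAtMost (m n : ℕ) := {π : Setoid (Fin m) // Nat.card (Quotient π) ≤ n}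

namespace MEnd

variable {n k : ℕ}

def kerPartition (I J : Fin k → Fin n) : PartitionsAtMost (k + k) n :=
  ⟨Setoid.ker (Fin.append I J), by simpa using Setoid.card_quotient_ker_le (Fin.append I J)⟩

theorem exists_kerPartition_eq (π : PartitionsAtMost (k + k) n) :
    ∃ p : (Fin k → Fin n) × (Fin k → Fin n), kerPartition p.1 p.2 = π := by
  obtain ⟨g, hg⟩ := Setoid.exists_ker_eq_of_card_le (β := Fin n) π.1 (by simpa using π.2)
  refine ⟨(Fin.appendEquiv k k).symm g, Subtype.ext ?_⟩
  change Setoid.ker (Fin.appendEquiv k k ((Fin.appendEquiv k k).symm g)) = π.1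
  rw [Equiv.apply_symm_apply, hg]

theorem apply_eq_of_kerPartition_eq {f : (Fin k → Fin n) × (Fin k → Fin n) → ℂ}
    (hf : f ∈ MEnd n k) {I J I' J' : Fin k → Fin n}
    (h : kerPartition I J = kerPartition I' J') : f (I, J) = f (I', J') := by
  obtain ⟨σ, hσ⟩ := Setoid.exists_perm_comp_eq_of_ker_eq (Subtype.ext_iff.1 h)
  rw [Fin.comp_append] at hσ
  have hIJ : (⇑σ ∘ I, ⇑σ ∘ J) = (I', J') := (Fin.appendEquiv k k).injective hσ
  rw [← hIJ, hf σ I J]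

theorem comp_kerPartition_mem (c : PartitionsAtMost (k + k) n → ℂ) :
    (fun p => c (kerPartition p.1 p.2)) ∈ MEnd n k := fun σ I J => by
  simp only [kerPartition, ← Fin.comp_append, Setoid.ker_comp_of_injective _ σ.injective]

def equivFun : MEnd n k ≃ₗ[ℂ] (PartitionsAtMost (k + k) n → ℂ) where
  toFun f π := (f : _ → ℂ) (exists_kerPartition_eq π).choose
  map_add' _ _ := rfl
  map_smul' _ _ := rfl
  invFun c := ⟨fun p => c (kerPartition p.1 p.2), comp_kerPartition_mem c⟩
  left_inv f := Subtype.ext <| funext fun _ =>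
    apply_eq_of_kerPartition_eq f.2 (exists_kerPartition_eq _).choose_spec
  right_inv c := funext fun π => congrArg c (exists_kerPartition_eq π).choose_spec

theorem equivFun_symm_apply (c : PartitionsAtMost (k + k) n → ℂ) (I J : Fin k → Fin n) :
    (equivFun.symm c : _ → ℂ) (I, J) = c (kerPartition I J) :=
  rfl

end MEnd

theorem MEnd_basis_general (k n : ℕ) :
    ∃ b : Module.Basis {π : Setoid (Fin (k + k)) // Nat.card (Quotient π) ≤ n} ℂ ↥(MEnd n k),
      ∀ (π : {π : Setoid (Fin (k + k)) // Nat.card (Quotient π) ≤ n})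
        (I J : Fin k → Fin n),
        (b π : (Fin k → Fin n) × (Fin k → Fin n) → ℂ) (I, J) =
          if Setoid.ker (Fin.append I J) = (π : Setoid (Fin (k + k))) then 1 else 0 := by
  refine ⟨.ofEquivFun MEnd.equivFun, fun π I J => ?_⟩
  simp only [Module.Basis.coe_ofEquivFun, MEnd.equivFun_symm_apply, Pi.single_apply,
    Subtype.ext_iff, MEnd.kerPartition]

/-- the matrices `X_π`, for `π` a set partition of a `2k`-element set
(here `Fin (k + k)`) with at most `n` blocks, where `X_π (I, J) = 1` if the kernel
partition of the concatenated tuple `(I, J) : Fin (k + k) → Fin n` equals `π` and `0`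
otherwise, form a basis of `End_{S_n}(M_n^{⊗k})`. -/
theorem MEnd_basis (k n : ℕ) (hn : 1 ≤ n) :
    ∃ b : Module.Basis {π : Setoid (Fin (k + k)) // Nat.card (Quotient π) ≤ n} ℂ ↥(MEnd n k),
      ∀ (π : {π : Setoid (Fin (k + k)) // Nat.card (Quotient π) ≤ n})
        (I J : Fin k → Fin n),
        (b π : (Fin k → Fin n) × (Fin k → Fin n) → ℂ) (I, J) =
          if Setoid.ker (Fin.append I J) = (π : Setoid (Fin (k + k))) then 1 else 0 :=
  MEnd_basis_general k n

end
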